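/- Let j ≥ 0 be a half-integer, m₁, m₂ half-integers with j+m₁, j+m₂ ∈ ℤ and −j ≤ m₁, m₂ ≤ j, n a real number, and ε ∈ {+1, −1}. Then for all ζ, ψ, φ ∈ ℝ and all θ ∈ (0, π): exp(ε i ψ) · ( csc θ · ∂W/∂φ + ε i · ∂W/∂θ − cot θ · ∂W/∂ψ )(ζ,ψ,θ,φ) = −i · √((j−εm₁)(j+εm₁+1)) · W^{(j,n)}_{m₁+ε, m₂}(ζ,ψ,θ,φ), where W denotes the function W^{(j,n)}_{m₁,m₂} and ∂W/∂φ, ∂W/∂θ, ∂W/∂ψ denote its partial derivatives in the respective variables. -/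

import Mathlib

/-!
Write `W = A(ζ, ψ, φ) · d(θ)`. Then `∂_φ` and `∂_ψ` act as multiplication by `i m₂` and `i m₁`,
and the claim splits into the first-order relation
`ε sin θ d'_{m₁} + (m₂ - m₁ cos θ) d_{m₁} = -(j + ε m₁ + 1) sin θ d_{m₁+ε}` for the little
d-function and the identity `√((j - ε m₁)(j + ε m₁ + 1)) N(m₁ + ε) = (j + ε m₁ + 1) N(m₁)` for
the normalisations `N(m) = √((j+m)! (j-m)!)`.

For `ε = 1` the relation is checked on the expansion of `d` in `sin (θ/2)` and `cos (θ/2)`: after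
an index shift it becomes a three-term recurrence for the coefficients. Written with `1/n!`
extended by zero to negative `n` (which is what `Γ` gives, since Mathlib's `Γ` vanishes at its
poles), the recurrence `1/(n-1)! = n · 1/n!` holds on all of `ℤ`, so there are no boundary cases
and the sums may be taken over any range containing the support. The case `ε = -1` follows from
the symmetry `d_{m₁,m₂} = (-1)^(m₂-m₁) d_{-m₁,-m₂}`. When `m₁ + ε` leaves `[-j, j]` both sides
vanish: the square root is `√0` and `d_{m₁+ε}` is an empty sum.
-/

/-- A half-integer is an element of `(1/2)ℤ`. -/
def HalfInt (x : ℝ) : Prop := ∃ k : ℤ, x = k / 2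

/-- The little Wigner d-function `d^j_{m₁,m₂}(θ)`, defined as the finite sum
`Σ_p (−1)^{m₂−m₁+p} / ((j+m₁−p)!·p!·(m₂−m₁+p)!·(j−m₂−p)!) · sin(θ/2)^{m₂−m₁+2p} ·
cos(θ/2)^{2j+m₁−m₂−2p}` over integers `p` with `max(0, m₁−m₂) ≤ p ≤ min(j−m₂, j+m₁)`
(the factorials of the nonnegative integers appearing are expressed via the Gamma
function, `x! = Γ(x+1)`). -/
noncomputable def wignerd (j m₁ m₂ θ : ℝ) : ℝ :=
  ∑ p ∈ Finset.Icc (max 0 ⌈m₁ - m₂⌉) ⌊min (j - m₂) (j + m₁)⌋,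
    (-1 : ℝ) ^ (⌈m₂ - m₁⌉ + p) /
      (Real.Gamma (j + m₁ - (p : ℝ) + 1) * Real.Gamma ((p : ℝ) + 1) *
        Real.Gamma (m₂ - m₁ + (p : ℝ) + 1) * Real.Gamma (j - m₂ - (p : ℝ) + 1)) *
      Real.sin (θ / 2) ^ (⌈m₂ - m₁⌉ + 2 * p) *
      Real.cos (θ / 2) ^ (⌊2 * j + m₁ - m₂⌋ - 2 * p)

open Classical in
/-- The Wigner D-function `W^{(j,n)}_{m₁,m₂}(ζ,ψ,θ,φ)`, with the convention that it is `0`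
if `m₁` or `m₂` lies outside `[−j, j]` or `j ± m₁ ∉ ℤ` or `j ± m₂ ∉ ℤ`. -/
noncomputable def WignerD (j n m₁ m₂ : ℝ) (ζ ψ θ φ : ℝ) : ℂ :=
  if (-j ≤ m₁ ∧ m₁ ≤ j) ∧ (-j ≤ m₂ ∧ m₂ ≤ j) ∧
      (∃ a : ℤ, j + m₁ = a) ∧ (∃ a : ℤ, j - m₁ = a) ∧
      (∃ a : ℤ, j + m₂ = a) ∧ (∃ a : ℤ, j - m₂ = a) then
    ((Real.sqrt (Real.Gamma (j + m₁ + 1) * Real.Gamma (j - m₁ + 1)) *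
        Real.sqrt (Real.Gamma (j + m₂ + 1) * Real.Gamma (j - m₂ + 1)) : ℝ) : ℂ) *
      Complex.exp (Complex.I * n * ζ) *
      Complex.exp (Complex.I * (m₁ * ψ + m₂ * φ)) * ((wignerd j m₁ m₂ θ : ℝ) : ℂ)
  else 0

open Real Finset

namespace Real

theorem Gamma_intCast_eq_zero {n : ℤ} (hn : n ≤ 0) : Gamma n = 0 := by
  obtain ⟨m, rfl⟩ := Int.exists_eq_neg_ofNat hn
  simpa using Gamma_neg_nat_eq_zero m

theorem inv_Gamma_eq_mul_inv_Gamma_add_one (x : ℝ) : (Gamma x)⁻¹ = x * (Gamma (x + 1))⁻¹ := by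
  rcases eq_or_ne x 0 with rfl | hx
  · simp
  · rw [Gamma_add_one hx, mul_inv, ← mul_assoc, mul_inv_cancel₀ hx, one_mul]

end Real

theorem neg_one_zpow_sub_one {α : Type*} [DivisionRing α] (n : ℤ) :
    (-1 : α) ^ (n - 1) = -(-1) ^ n := by
  rw [zpow_sub_one₀ (neg_ne_zero.mpr one_ne_zero), inv_neg_one, mul_neg_one]

noncomputable def invFactorial (n : ℤ) : ℝ := (Gamma (n + 1))⁻¹

theorem invFactorial_of_neg {n : ℤ} (hn : n < 0) : invFactorial n = 0 := by
  rw [invFactorial, ← Int.cast_one, ← Int.cast_add, Gamma_intCast_eq_zero (by omega), inv_zero]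

theorem invFactorial_sub_one (n : ℤ) : invFactorial (n - 1) = n * invFactorial n := by
  rw [invFactorial, invFactorial, Int.cast_sub, Int.cast_one, sub_add_cancel,
    inv_Gamma_eq_mul_inv_Gamma_add_one]

/-- The `p`-th coefficient of `d^j_{m₁,m₂}`, indexed by `a = j + m₁`, `b = j - m₂` and
`μ = m₂ - m₁` (see `wignerd_eq_sum`). -/
noncomputable def wignerCoeff (a b μ p : ℤ) : ℝ :=
  (-1) ^ (μ + p) *
    (invFactorial (a - p) * invFactorial p * invFactorial (μ + p) * invFactorial (b - p))

theorem wignerCoeff_eq_zero {a b μ p : ℤ} (hp : p ∉ Icc (max 0 (-μ)) (min b a)) :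
    wignerCoeff a b μ p = 0 := by
  simp only [mem_Icc, max_le_iff, le_min_iff, not_and_or, not_le] at hp
  rcases hp with (hp | hp) | hp | hp
  · simp [wignerCoeff, invFactorial_of_neg hp]
  · simp [wignerCoeff, invFactorial_of_neg (by omega : μ + p < 0)]
  · simp [wignerCoeff, invFactorial_of_neg (by omega : b - p < 0)]
  · simp [wignerCoeff, invFactorial_of_neg (by omega : a - p < 0)]

theorem wignerCoeff_raise (a b μ q : ℤ) :
    (μ + q) * wignerCoeff a b μ q - (b - q + 1) * wignerCoeff a b μ (q - 1)
      = -(a + 1) * wignerCoeff (a + 1) b (μ - 1) q := by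
  have ha : invFactorial (a - q) = (a - q + 1) * invFactorial (a - q + 1) := by
    simpa using invFactorial_sub_one (a - q + 1)
  have hb : invFactorial (b - q) = (b - q + 1) * invFactorial (b - q + 1) := by
    simpa using invFactorial_sub_one (b - q + 1)
  simp only [wignerCoeff, show μ + (q - 1) = μ + q - 1 by ring,
    show μ - 1 + q = μ + q - 1 by ring, show a - (q - 1) = a - q + 1 by ring,
    show a + 1 - q = a - q + 1 by ring, show b - (q - 1) = b - q + 1 by ring,
    neg_one_zpow_sub_one, invFactorial_sub_one, ha, hb]
  push_cast
  ring

theorem wignerCoeff_eq_neg_one_zpow_mul (a b μ p : ℤ) :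
    wignerCoeff a b μ p = (-1) ^ μ * wignerCoeff (b + μ) (a + μ) (-μ) (p + μ) := by
  rw [wignerCoeff, wignerCoeff, show b + μ - (p + μ) = b - p by ring,
    show -μ + (p + μ) = p by ring, show a + μ - (p + μ) = a - p by ring, add_comm p μ,
    zpow_add₀ (by norm_num)]
  ring

theorem sum_wignerCoeff_mul_of_subset (a b μ : ℤ) (g : ℤ → ℝ) {S : Finset ℤ}
    (hS : Icc (max 0 (-μ)) (min b a) ⊆ S) :
    ∑ p ∈ Icc (max 0 (-μ)) (min b a), wignerCoeff a b μ p * g p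
      = ∑ p ∈ S, wignerCoeff a b μ p * g p :=
  sum_subset hS fun p _ hp => by rw [wignerCoeff_eq_zero hp, zero_mul]

theorem sum_wignerCoeff_raise (a b μ : ℤ) (f : ℤ → ℝ) :
    ∑ p ∈ Icc (max 0 (-μ)) (min b a),
        wignerCoeff a b μ p * ((μ + p) * f p - (b - p) * f (p + 1))
      = -(a + 1) * ∑ q ∈ Icc (max 0 (-(μ - 1))) (min b (a + 1)),
          wignerCoeff (a + 1) b (μ - 1) q * f q := by
  set J := Icc (max 0 (-μ)) (min b a + 1)
  have hshift : ∑ p ∈ Icc (max 0 (-μ)) (min b a), wignerCoeff a b μ p * ((b - p) * f (p + 1))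
      = ∑ q ∈ J, wignerCoeff a b μ (q - 1) * ((b - q + 1) * f q) := by
    rw [sum_wignerCoeff_mul_of_subset a b μ _ (S := Icc (max 0 (-μ) - 1) (min b a))
        (Icc_subset_Icc (by omega) le_rfl),
      show J = Icc (max 0 (-μ) - 1 + 1) (min b a + 1) by rw [sub_add_cancel],
      ← map_add_right_Icc, sum_map]
    refine sum_congr rfl fun p _ => ?_
    rw [addRightEmbedding_apply, add_sub_cancel_right]
    push_cast
    ring
  simp only [mul_sub, sum_sub_distrib]
  rw [sum_wignerCoeff_mul_of_subset a b μ _ (S := J) (Icc_subset_Icc le_rfl (by omega)), hshift,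
    sum_wignerCoeff_mul_of_subset _ _ _ f (S := J) (Icc_subset_Icc (by omega) (by omega)),
    ← sum_sub_distrib, mul_sum]
  exact sum_congr rfl fun q _ => by linear_combination f q * wignerCoeff_raise a b μ q

theorem sin_eq_two_mul_sin_half_mul_cos_half (θ : ℝ) :
    sin θ = 2 * sin (θ / 2) * cos (θ / 2) := by
  rw [← sin_two_mul, mul_div_cancel₀ θ two_ne_zero]

theorem cos_eq_cos_half_sq_sub_sin_half_sq (θ : ℝ) :
    cos θ = cos (θ / 2) ^ 2 - sin (θ / 2) ^ 2 := by
  rw [← cos_two_mul', mul_div_cancel₀ θ two_ne_zero]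

theorem sin_half_ne_zero_and_cos_half_ne_zero {θ : ℝ} (hθ : sin θ ≠ 0) :
    sin (θ / 2) ≠ 0 ∧ cos (θ / 2) ≠ 0 := by
  rw [sin_eq_two_mul_sin_half_mul_cos_half] at hθ
  exact ⟨fun h => by simp [h] at hθ, fun h => by simp [h] at hθ⟩

theorem hasDerivAt_sin_half_zpow_mul_cos_half_zpow (e f : ℤ) {θ : ℝ} (hθ : sin θ ≠ 0) :
    HasDerivAt (fun t => sin (t / 2) ^ e * cos (t / 2) ^ f)
      ((sin θ)⁻¹ * (e * cos (θ / 2) ^ 2 - f * sin (θ / 2) ^ 2) *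
        (sin (θ / 2) ^ e * cos (θ / 2) ^ f)) θ := by
  obtain ⟨hs, hc⟩ := sin_half_ne_zero_and_cos_half_ne_zero hθ
  have hhalf : HasDerivAt (fun t : ℝ => t / 2) (1 / 2) θ := (hasDerivAt_id θ).div_const 2
  have hsin := (hasDerivAt_zpow e _ (Or.inl hs)).comp θ ((hasDerivAt_sin _).comp θ hhalf)
  have hcos := (hasDerivAt_zpow f _ (Or.inl hc)).comp θ ((hasDerivAt_cos _).comp θ hhalf)
  refine (hsin.mul hcos).congr_deriv ?_
  simp only [Function.comp_apply]
  rw [zpow_sub_one₀ hs, zpow_sub_one₀ hc, sin_eq_two_mul_sin_half_mul_cos_half θ]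
  field_simp
  ring

section IntegralIndices

variable {j m₁ m₂ : ℝ} {a b μ : ℤ}

theorem wignerd_eq_sum (hA : j + m₁ = a) (hB : j - m₂ = b) (hM : m₂ - m₁ = μ) (θ : ℝ) :
    wignerd j m₁ m₂ θ = ∑ p ∈ Icc (max 0 (-μ)) (min b a),
      wignerCoeff a b μ p * (sin (θ / 2) ^ (μ + 2 * p) * cos (θ / 2) ^ (a + b - 2 * p)) := by
  have hM' : m₁ - m₂ = ((-μ : ℤ) : ℝ) := by push_cast; linarith
  have hAB : 2 * j + m₁ - m₂ = ((a + b : ℤ) : ℝ) := by push_cast; linarith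
  simp only [wignerd, hA, hB, hM, hM', hAB, ← Int.cast_min, Int.ceil_intCast, Int.floor_intCast]
  refine sum_congr rfl fun p _ => ?_
  simp only [wignerCoeff, invFactorial, div_eq_mul_inv, mul_inv]
  push_cast
  ring

theorem wignerd_eq_zero_of_lt_abs (hA : j + m₁ = a) (hB : j - m₂ = b) (hM : m₂ - m₁ = μ)
    (h : j < |m₁|) (θ : ℝ) : wignerd j m₁ m₂ θ = 0 := by
  have : a < 0 ∨ b + μ < 0 := by
    rcases lt_abs.mp h with h | h
    · exact Or.inr (by exact_mod_cast (show ((b + μ : ℤ) : ℝ) < 0 by push_cast; linarith))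
    · exact Or.inl (by exact_mod_cast (show (a : ℝ) < 0 by linarith))
  rw [wignerd_eq_sum hA hB hM, Icc_eq_empty (by omega), sum_empty]

theorem wignerd_eq_neg_one_zpow_mul_neg (hA : j + m₁ = a) (hB : j - m₂ = b)
    (hM : m₂ - m₁ = μ) (θ : ℝ) : wignerd j m₁ m₂ θ = (-1) ^ μ * wignerd j (-m₁) (-m₂) θ := by
  rw [wignerd_eq_sum hA hB hM θ, wignerd_eq_sum (a := b + μ) (b := a + μ) (μ := -μ)
      (by push_cast; linarith) (by push_cast; linarith) (by push_cast; linarith),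
    show Icc (max 0 (- -μ)) (min (a + μ) (b + μ)) = Icc (max 0 (-μ) + μ) (min b a + μ) by
      congr 1 <;> omega,
    ← map_add_right_Icc, sum_map, mul_sum]
  refine sum_congr rfl fun p _ => ?_
  rw [wignerCoeff_eq_neg_one_zpow_mul, addRightEmbedding_apply,
    show -μ + 2 * (p + μ) = μ + 2 * p by ring,
    show b + μ + (a + μ) - 2 * (p + μ) = a + b - 2 * p by ring]
  ring

theorem hasDerivAt_wignerd (hA : j + m₁ = a) (hB : j - m₂ = b) (hM : m₂ - m₁ = μ) {θ : ℝ}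
    (hθ : sin θ ≠ 0) :
    HasDerivAt (wignerd j m₁ m₂) (∑ p ∈ Icc (max 0 (-μ)) (min b a), wignerCoeff a b μ p *
      ((sin θ)⁻¹ * ((μ + 2 * p : ℤ) * cos (θ / 2) ^ 2 - (a + b - 2 * p : ℤ) * sin (θ / 2) ^ 2) *
        (sin (θ / 2) ^ (μ + 2 * p) * cos (θ / 2) ^ (a + b - 2 * p)))) θ := by
  rw [show wignerd j m₁ m₂ = _ from funext (wignerd_eq_sum hA hB hM)]
  exact HasDerivAt.fun_sum fun p _ =>
    (hasDerivAt_sin_half_zpow_mul_cos_half_zpow _ _ hθ).const_mul _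

theorem wignerd_raise (hA : j + m₁ = a) (hB : j - m₂ = b) (hM : m₂ - m₁ = μ) {θ : ℝ}
    (hθ : sin θ ≠ 0) :
    sin θ * deriv (wignerd j m₁ m₂) θ + (m₂ - m₁ * cos θ) * wignerd j m₁ m₂ θ
      = -(j + m₁ + 1) * (sin θ * wignerd j (m₁ + 1) m₂ θ) := by
  obtain ⟨hs, hc⟩ := sin_half_ne_zero_and_cos_half_ne_zero hθ
  have hsin_add_two (k : ℤ) : sin (θ / 2) ^ (k + 2) = sin (θ / 2) ^ k * sin (θ / 2) ^ 2 := by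
    rw [zpow_add₀ hs]; norm_cast
  have hcos_add_two (k : ℤ) : cos (θ / 2) ^ (k + 2) = cos (θ / 2) ^ k * cos (θ / 2) ^ 2 := by
    rw [zpow_add₀ hc]; norm_cast
  -- after multiplying by `sin θ = 2 sin (θ/2) cos (θ/2)`, the monomials on both sides are the `M q`
  set M : ℤ → ℝ := fun q => 2 * (sin (θ / 2) ^ (μ + 2 * q) * cos (θ / 2) ^ (a + b + 2 - 2 * q))
  rw [(hasDerivAt_wignerd hA hB hM hθ).deriv, wignerd_eq_sum hA hB hM,
    wignerd_eq_sum (a := a + 1) (μ := μ - 1) (by push_cast; linarith) hB (by push_cast; linarith),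
    mul_sum, mul_sum, ← sum_add_distrib]
  calc _ = ∑ p ∈ Icc (max 0 (-μ)) (min b a),
        wignerCoeff a b μ p * ((μ + p) * M p - (b - p) * M (p + 1)) := by
        refine sum_congr rfl fun p _ => ?_
        simp only [M, show a + b + 2 - 2 * p = a + b - 2 * p + 2 by ring,
          show μ + 2 * (p + 1) = μ + 2 * p + 2 by ring,
          show a + b + 2 - 2 * (p + 1) = a + b - 2 * p by ring, hsin_add_two, hcos_add_two]
        set T := wignerCoeff a b μ p * (sin (θ / 2) ^ (μ + 2 * p) * cos (θ / 2) ^ (a + b - 2 * p))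
        push_cast
        linear_combination
          T * ((μ + 2 * p) * cos (θ / 2) ^ 2 - (a + b - 2 * p) * sin (θ / 2) ^ 2) *
            mul_inv_cancel₀ hθ
          - T * m₁ * cos_eq_cos_half_sq_sub_sin_half_sq θ - T * m₂ * sin_sq_add_cos_sq (θ / 2)
          + T * cos (θ / 2) ^ 2 * hM + T * sin (θ / 2) ^ 2 * (hA - hB)
    _ = -(a + 1) * ∑ q ∈ Icc (max 0 (-(μ - 1))) (min b (a + 1)),
          wignerCoeff (a + 1) b (μ - 1) q * M q := sum_wignerCoeff_raise a b μ M
    _ = _ := by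
        rw [← hA]
        congr 1
        rw [mul_sum]
        refine sum_congr rfl fun q _ => ?_
        simp only [M, show μ + 2 * q = μ - 1 + 2 * q + 1 by ring,
          show a + b + 2 - 2 * q = a + 1 + b - 2 * q + 1 by ring, zpow_add_one₀ hs,
          zpow_add_one₀ hc, sin_eq_two_mul_sin_half_mul_cos_half θ]
        ring

theorem wignerd_lower (hA : j + m₁ = a) (hB : j - m₂ = b) (hM : m₂ - m₁ = μ) {θ : ℝ}
    (hθ : sin θ ≠ 0) :
    -(sin θ * deriv (wignerd j m₁ m₂) θ) + (m₂ - m₁ * cos θ) * wignerd j m₁ m₂ θ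
      = -(j - m₁ + 1) * (sin θ * wignerd j (m₁ - 1) m₂ θ) := by
  have hA' : j + -m₁ = (b + μ : ℤ) := by push_cast; linarith
  have hB' : j - -m₂ = (a + μ : ℤ) := by push_cast; linarith
  have hM' : -m₂ - -m₁ = (-μ : ℤ) := by push_cast; linarith
  have hsymm : wignerd j m₁ m₂ = fun t => (-1) ^ μ * wignerd j (-m₁) (-m₂) t :=
    funext (wignerd_eq_neg_one_zpow_mul_neg hA hB hM)
  have hsymm_sub := wignerd_eq_neg_one_zpow_mul_neg (m₁ := m₁ - 1) (a := a - 1) (μ := μ + 1)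
    (by push_cast; linarith) hB (by push_cast; linarith) θ
  rw [neg_sub', sub_neg_eq_add, zpow_add_one₀ (by norm_num)] at hsymm_sub
  rw [hsymm, deriv_const_mul_field', hsymm_sub]
  linear_combination (-(-1 : ℝ) ^ μ) * wignerd_raise hA' hB' hM' hθ

theorem wignerd_shift {ε : ℝ} (hε : ε = 1 ∨ ε = -1) (hA : j + m₁ = a) (hB : j - m₂ = b)
    (hM : m₂ - m₁ = μ) {θ : ℝ} (hθ : sin θ ≠ 0) :
    ε * (sin θ * deriv (wignerd j m₁ m₂) θ) + (m₂ - m₁ * cos θ) * wignerd j m₁ m₂ θ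
      = -(j + ε * m₁ + 1) * (sin θ * wignerd j (m₁ + ε) m₂ θ) := by
  rcases hε with rfl | rfl
  · linear_combination wignerd_raise hA hB hM hθ
  · rw [← sub_eq_add_neg]
    linear_combination wignerd_lower hA hB hM hθ

end IntegralIndices

theorem HalfInt.exists_sub_eq_intCast {j m : ℝ} (hj : HalfInt j) (h : ∃ a : ℤ, j + m = a) :
    ∃ b : ℤ, j - m = b := by
  obtain ⟨k, hk⟩ := hj
  obtain ⟨a, ha⟩ := h
  exact ⟨k - a, by push_cast; linarith⟩

noncomputable def wignerNorm (j m : ℝ) : ℝ := √(Gamma (j + m + 1) * Gamma (j - m + 1))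

theorem wignerNorm_neg (j m : ℝ) : wignerNorm j (-m) = wignerNorm j m := by
  rw [wignerNorm, wignerNorm, mul_comm, sub_neg_eq_add, ← sub_eq_add_neg]

theorem sqrt_mul_wignerNorm_add_one {j m : ℝ} (h₁ : 0 < j + m + 1) (h₂ : 0 < j - m) :
    √((j - m) * (j + m + 1)) * wignerNorm j (m + 1) = (j + m + 1) * wignerNorm j m := by
  have hΓ : (j - m) * (j + m + 1) * (Gamma (j + (m + 1) + 1) * Gamma (j - (m + 1) + 1))
      = (j + m + 1) ^ 2 * (Gamma (j + m + 1) * Gamma (j - m + 1)) := by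
    rw [show j + (m + 1) + 1 = j + m + 1 + 1 by ring, Gamma_add_one h₁.ne',
      show j - (m + 1) + 1 = j - m by ring, Gamma_add_one h₂.ne']
    ring
  rw [wignerNorm, wignerNorm, ← sqrt_mul (by positivity), hΓ, sqrt_mul (sq_nonneg _),
    sqrt_sq h₁.le]

theorem sqrt_mul_wignerNorm_add {j m ε : ℝ} (hε : ε = 1 ∨ ε = -1) (h₁ : 0 < j + ε * m + 1)
    (h₂ : 0 < j - ε * m) :
    √((j - ε * m) * (j + ε * m + 1)) * wignerNorm j (m + ε)
      = (j + ε * m + 1) * wignerNorm j m := by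
  rcases hε with rfl | rfl
  · simpa using sqrt_mul_wignerNorm_add_one (by simpa using h₁) (by simpa using h₂)
  · have := sqrt_mul_wignerNorm_add_one (j := j) (m := -m) (by linarith) (by linarith)
    rw [show -m + 1 = -(m + -1) by ring, wignerNorm_neg, wignerNorm_neg] at this
    convert this using 3 <;> ring

def IsWignerIndex (j m₁ m₂ : ℝ) : Prop :=
  (-j ≤ m₁ ∧ m₁ ≤ j) ∧ (-j ≤ m₂ ∧ m₂ ≤ j) ∧
    (∃ a : ℤ, j + m₁ = a) ∧ (∃ a : ℤ, j - m₁ = a) ∧ (∃ a : ℤ, j + m₂ = a) ∧ (∃ a : ℤ, j - m₂ = a)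

noncomputable def wignerAngular (j n m₁ m₂ ζ ψ φ : ℝ) : ℂ :=
  ((wignerNorm j m₁ * wignerNorm j m₂ : ℝ) : ℂ) * Complex.exp (Complex.I * n * ζ) *
    Complex.exp (Complex.I * (m₁ * ψ + m₂ * φ))

section WignerD

variable {j n m₁ m₂ : ℝ}

theorem WignerD_eq_wignerAngular_mul (h : IsWignerIndex j m₁ m₂) (ζ ψ θ φ : ℝ) :
    WignerD j n m₁ m₂ ζ ψ θ φ = wignerAngular j n m₁ m₂ ζ ψ φ * wignerd j m₁ m₂ θ := by
  unfold WignerD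
  exact if_pos h

theorem WignerD_eq_zero (h : ¬IsWignerIndex j m₁ m₂) (ζ ψ θ φ : ℝ) :
    WignerD j n m₁ m₂ ζ ψ θ φ = 0 := by
  unfold WignerD
  exact if_neg h

theorem hasDerivAt_WignerD_φ (ζ ψ θ φ : ℝ) :
    HasDerivAt (fun t => WignerD j n m₁ m₂ ζ ψ θ t)
      (Complex.I * m₂ * WignerD j n m₁ m₂ ζ ψ θ φ) φ := by
  by_cases h : IsWignerIndex j m₁ m₂
  · simp only [WignerD_eq_wignerAngular_mul h, wignerAngular]
    have hlin : HasDerivAt (fun t : ℝ => Complex.I * (m₁ * ψ + m₂ * t)) (Complex.I * m₂) φ := by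
      simpa using ((hasDerivAt_id φ).ofReal_comp.const_mul (m₂ : ℂ)).const_add
        ((m₁ : ℂ) * ψ) |>.const_mul Complex.I
    refine ((hlin.cexp.const_mul _).mul_const _).congr_deriv ?_
    ring
  · simpa [WignerD_eq_zero h] using hasDerivAt_const φ (0 : ℂ)

theorem hasDerivAt_WignerD_ψ (ζ ψ θ φ : ℝ) :
    HasDerivAt (fun t => WignerD j n m₁ m₂ ζ t θ φ)
      (Complex.I * m₁ * WignerD j n m₁ m₂ ζ ψ θ φ) ψ := by
  by_cases h : IsWignerIndex j m₁ m₂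
  · simp only [WignerD_eq_wignerAngular_mul h, wignerAngular]
    have hlin : HasDerivAt (fun t : ℝ => Complex.I * (m₁ * t + m₂ * φ)) (Complex.I * m₁) ψ := by
      simpa using ((hasDerivAt_id ψ).ofReal_comp.const_mul (m₁ : ℂ)).add_const
        ((m₂ : ℂ) * φ) |>.const_mul Complex.I
    refine ((hlin.cexp.const_mul _).mul_const _).congr_deriv ?_
    ring
  · simpa [WignerD_eq_zero h] using hasDerivAt_const ψ (0 : ℂ)

theorem hasDerivAt_WignerD_θ (h : IsWignerIndex j m₁ m₂) {ζ ψ θ φ d : ℝ}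
    (hd : HasDerivAt (wignerd j m₁ m₂) d θ) :
    HasDerivAt (fun t => WignerD j n m₁ m₂ ζ ψ t φ) (wignerAngular j n m₁ m₂ ζ ψ φ * d) θ := by
  simp only [WignerD_eq_wignerAngular_mul h]
  exact hd.ofReal_comp.const_mul _

theorem sqrt_mul_WignerD_add {ε : ℝ} (hε : ε = 1 ∨ ε = -1) (h : IsWignerIndex j m₁ m₂)
    (ζ ψ θ φ : ℝ) :
    (√((j - ε * m₁) * (j + ε * m₁ + 1)) : ℂ) * WignerD j n (m₁ + ε) m₂ ζ ψ θ φ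
      = (j + ε * m₁ + 1) * Complex.exp (ε * Complex.I * ψ) * wignerAngular j n m₁ m₂ ζ ψ φ *
          wignerd j (m₁ + ε) m₂ θ := by
  obtain ⟨⟨hl, hu⟩, hm₂, ⟨a, hA⟩, ⟨a', hA'⟩, ⟨c, hC⟩, ⟨b, hB⟩⟩ := h
  obtain ⟨e, rfl⟩ : ∃ e : ℤ, (e : ℝ) = ε := by
    rcases hε with rfl | rfl
    exacts [⟨1, Int.cast_one⟩, ⟨-1, by simp⟩]
  have hAe : j + (m₁ + e) = (a + e : ℤ) := by push_cast; linarith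
  have hMe : m₂ - (m₁ + e) = (c - a - e : ℤ) := by push_cast; linarith
  by_cases hr : -j ≤ m₁ + e ∧ m₁ + e ≤ j
  · have hidx : IsWignerIndex j (m₁ + e) m₂ :=
      ⟨hr, hm₂, ⟨a + e, hAe⟩, ⟨a' - e, by push_cast; linarith⟩, ⟨c, hC⟩, ⟨b, hB⟩⟩
    have hpos : 0 < j + e * m₁ + 1 ∧ 0 < j - e * m₁ := by
      rcases hε with hε | hε <;> rw [hε] <;> constructor <;> linarith [hr.1, hr.2]
    have hnorm : (√((j - e * m₁) * (j + e * m₁ + 1)) : ℂ) * (wignerNorm j (m₁ + e) : ℂ)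
        = (j + e * m₁ + 1) * wignerNorm j m₁ := by
      exact_mod_cast sqrt_mul_wignerNorm_add hε hpos.1 hpos.2
    have hexp : Complex.exp (Complex.I * (((m₁ + e : ℝ) : ℂ) * ψ + m₂ * φ))
        = Complex.exp (e * Complex.I * ψ) * Complex.exp (Complex.I * (m₁ * ψ + m₂ * φ)) := by
      rw [← Complex.exp_add]
      push_cast
      ring_nf
    rw [WignerD_eq_wignerAngular_mul hidx, wignerAngular, wignerAngular, hexp]
    push_cast
    linear_combination (wignerNorm j m₂ * Complex.exp (Complex.I * n * ζ) *
      Complex.exp (e * Complex.I * ψ) * Complex.exp (Complex.I * (m₁ * ψ + m₂ * φ)) *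
      wignerd j (m₁ + e) m₂ θ) * hnorm
  · have hout : j < |m₁ + e| := by
      rw [lt_abs]
      by_contra! hcon
      exact hr ⟨by linarith, hcon.1⟩
    rw [WignerD_eq_zero fun hidx => hr hidx.1, wignerd_eq_zero_of_lt_abs hAe hB hMe hout]
    simp

end WignerD

theorem wignerD_left_raising_lowering_general (j m₁ m₂ n ε : ℝ) (hj : HalfInt j)
    (hjm₁ : ∃ a : ℤ, j + m₁ = a) (hjm₂ : ∃ a : ℤ, j + m₂ = a)
    (hm₁l : -j ≤ m₁) (hm₁u : m₁ ≤ j) (hm₂l : -j ≤ m₂) (hm₂u : m₂ ≤ j)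
    (hε : ε = 1 ∨ ε = -1) (ζ ψ φ : ℝ) (θ : ℝ) (hθ : θ ∈ Set.Ioo 0 Real.pi) :
    Complex.exp ((ε : ℂ) * Complex.I * (ψ : ℂ)) *
        ((((Real.sin θ)⁻¹ : ℝ) : ℂ) *
            deriv (fun t : ℝ => WignerD j n m₁ m₂ ζ ψ θ t) φ +
          (ε : ℂ) * Complex.I * deriv (fun t : ℝ => WignerD j n m₁ m₂ ζ ψ t φ) θ -
          ((Real.cos θ / Real.sin θ : ℝ) : ℂ) *
            deriv (fun t : ℝ => WignerD j n m₁ m₂ ζ t θ φ) ψ) =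
      -Complex.I * ((Real.sqrt ((j - ε * m₁) * (j + ε * m₁ + 1)) : ℝ) : ℂ) *
        WignerD j n (m₁ + ε) m₂ ζ ψ θ φ := by
  obtain ⟨a, hA⟩ := hjm₁
  obtain ⟨c, hC⟩ := hjm₂
  obtain ⟨a', hA'⟩ := hj.exists_sub_eq_intCast ⟨a, hA⟩
  obtain ⟨b, hB⟩ := hj.exists_sub_eq_intCast ⟨c, hC⟩
  have hM : m₂ - m₁ = (c - a : ℤ) := by push_cast; linarith
  have hidx : IsWignerIndex j m₁ m₂ :=
    ⟨⟨hm₁l, hm₁u⟩, ⟨hm₂l, hm₂u⟩, ⟨a, hA⟩, ⟨a', hA'⟩, ⟨c, hC⟩, ⟨b, hB⟩⟩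
  have hsin : sin θ ≠ 0 := (sin_pos_of_pos_of_lt_pi hθ.1 hθ.2).ne'
  have hd := (hasDerivAt_wignerd hA hB hM hsin).differentiableAt.hasDerivAt
  have hrel : ε * deriv (wignerd j m₁ m₂) θ
        + ((sin θ)⁻¹ * m₂ - cos θ / sin θ * m₁) * wignerd j m₁ m₂ θ
      = -(j + ε * m₁ + 1) * wignerd j (m₁ + ε) m₂ θ := by
    field_simp
    linear_combination wignerd_shift hε hA hB hM hsin
  have hrelC := congrArg (fun x : ℝ => (x : ℂ)) hrel
  have hW := sqrt_mul_WignerD_add (n := n) hε hidx ζ ψ θ φ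
  rw [(hasDerivAt_WignerD_φ ζ ψ θ φ).deriv, (hasDerivAt_WignerD_θ hidx hd).deriv,
    (hasDerivAt_WignerD_ψ ζ ψ θ φ).deriv, WignerD_eq_wignerAngular_mul hidx]
  push_cast at hrelC hW ⊢
  linear_combination
    (Complex.exp (ε * Complex.I * ψ) * wignerAngular j n m₁ m₂ ζ ψ φ * Complex.I) * hrelC
      + Complex.I * hW

/-- Formula (3.25): the left regular action of the raising/lowering elements
`γ₁ ± i γ₂` of `𝔲(2)`, written as explicit differential operators in Euler-angle
coordinates, shifts the first lower index of a Wigner D-function: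
`e^{±iψ}(csc θ ∂_φ ± i ∂_θ − cot θ ∂_ψ) W^{(j,n)}_{m₁,m₂}
  = −i √((j∓m₁)(j±m₁+1)) W^{(j,n)}_{m₁±1,m₂}` (sign `ε = ±1`). -/
theorem wignerD_left_raising_lowering (j m₁ m₂ n ε : ℝ) (hj : HalfInt j) (hj0 : 0 ≤ j)
    (hm₁ : HalfInt m₁) (hm₂ : HalfInt m₂)
    (hjm₁ : ∃ a : ℤ, j + m₁ = a) (hjm₂ : ∃ a : ℤ, j + m₂ = a)
    (hm₁l : -j ≤ m₁) (hm₁u : m₁ ≤ j) (hm₂l : -j ≤ m₂) (hm₂u : m₂ ≤ j)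
    (hε : ε = 1 ∨ ε = -1) (ζ ψ φ : ℝ) (θ : ℝ) (hθ : θ ∈ Set.Ioo 0 Real.pi) :
    Complex.exp ((ε : ℂ) * Complex.I * (ψ : ℂ)) *
        ((((Real.sin θ)⁻¹ : ℝ) : ℂ) *
            deriv (fun t : ℝ => WignerD j n m₁ m₂ ζ ψ θ t) φ +
          (ε : ℂ) * Complex.I * deriv (fun t : ℝ => WignerD j n m₁ m₂ ζ ψ t φ) θ -
          ((Real.cos θ / Real.sin θ : ℝ) : ℂ) *
            deriv (fun t : ℝ => WignerD j n m₁ m₂ ζ t θ φ) ψ) =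
      -Complex.I * ((Real.sqrt ((j - ε * m₁) * (j + ε * m₁ + 1)) : ℝ) : ℂ) *
        WignerD j n (m₁ + ε) m₂ ζ ψ θ φ :=
  wignerD_left_raising_lowering_general j m₁ m₂ n ε hj hjm₁ hjm₂ hm₁l hm₁u hm₂l hm₂u hε ζ ψ φ θ hθ
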